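/- arXiv:1710.08308 — 2 statements merged into one kernel-verified Lean document; each statement's English description precedes it below -/
import Mathlib

section
/- Lemma 5 (elementwise cross-term bound). Let δ > 0, let y ∈ ℝ^N be nonzero with Uᵀy = 0, suppose m ≥ 4·(N‖y‖_∞²/‖y‖₂²)·log(1/δ), and define β := (1 + 2√(log(1/δ)))². Then with probability at least 1 − δ, ‖U_Ωᵀ y_Ω‖₂² ≤ β·(m·d·μ(S)/N²)·‖y‖₂². -/
/-!
With `x i := y i • Uᵢ` (row `i` of `U` scaled by `y i`), `U_Ωᵀ y_Ω = ∑ₖ x (Ω k)` is a sum of `m`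
i.i.d. vectors with mean `Uᵀ y / N = 0`, with `‖x i‖² ≤ B := d μ(S) ‖y‖∞² / N` and
`𝔼 ‖x‖² ≤ v := d μ(S) ‖y‖₂² / N²`. Its norm `f` has `𝔼 f ≤ √(m v)`, and switching one sample from
`b` to `a` changes `f` by at most `‖x a - x b‖`. Conditioning on one sample at a time and using
`eˢ ≤ 1 + s + s²` for `|s| ≤ 1` gives `𝔼 exp (l (f - 𝔼 f)) ≤ exp (m l² v)` whenever
`2 l √B ≤ 1`. The sample-size hypothesis says `4 t B ≤ m v` for `t = log (1/δ)`, which permits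
the Chernoff parameter `l = √t / √(m v)` and yields `P(f > (1 + 2√t) √(m v)) ≤ e⁻ᵗ = δ`.
-/

open Matrix
open scoped BigOperators
open Finset Real

lemma one_sub_le_ncard_div_card {Ω : Type*} [Fintype Ω] [Nonempty Ω] {p : Ω → Prop}
    [DecidablePred p] {δ : ℝ} (h : (#{ω | ¬ p ω} : ℝ) ≤ δ * Fintype.card Ω) :
    1 - δ ≤ ({ω | p ω}.ncard : ℝ) / Fintype.card Ω := by
  have hcard : ({ω | p ω}.ncard : ℝ) + #{ω | ¬ p ω} = Fintype.card Ω := by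
    rw [Set.ncard_eq_toFinset_card', Set.toFinset_ofPred]
    exact_mod_cast Finset.card_filter_add_card_filter_not p
  rw [le_div_iff₀ (by positivity)]
  linarith

section Sampling

variable {ι : Type*}

def HasBoundedDifferences {n : ℕ} (ρ : ι → ι → ℝ) (f : (Fin n → ι) → ℝ) : Prop :=
  ∀ ω k a b, |f (Function.update ω k a) - f (Function.update ω k b)| ≤ ρ a b

lemma HasBoundedDifferences.abs_sub_cons_le {n : ℕ} {ρ : ι → ι → ℝ} {f : (Fin (n + 1) → ι) → ℝ}
    (hf : HasBoundedDifferences ρ f) (ω : Fin n → ι) (a b : ι) :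
    |f (Fin.cons a ω) - f (Fin.cons b ω)| ≤ ρ a b := by
  simpa only [Fin.update_cons_zero] using hf (Fin.cons b ω) 0 a b

lemma hasBoundedDifferences_norm_sum {E : Type*} [SeminormedAddCommGroup E] (x : ι → E) (n : ℕ) :
    HasBoundedDifferences (fun a b => ‖x a - x b‖) fun ω : Fin n → ι => ‖∑ k, x (ω k)‖ := by
  classical
  intro ω k a b
  have hsum : ∀ c, ∑ k', x (Function.update ω k c k') = x c + ∑ k' ∈ univ \ {k}, x (ω k') :=
    fun c => by
      simp_rw [← Function.comp_apply (f := x), Function.comp_update]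
      exact Finset.sum_update_of_mem (Finset.mem_univ k) _ _
  simp only [hsum]
  exact (abs_norm_sub_norm_le _ _).trans_eq (by rw [add_sub_add_right_eq_sub])

variable [Fintype ι]

lemma expect_fin_cons {M : Type*} [AddCommMonoid M] [Module ℚ≥0 M] {n : ℕ}
    (g : (Fin (n + 1) → ι) → M) :
    𝔼 ω, g ω = 𝔼 i, 𝔼 ω' : Fin n → ι, g (Fin.cons i ω') := by
  rw [← Finset.expect_product', Finset.univ_product_univ]
  exact (Fintype.expect_equiv (Fin.consEquiv fun _ => ι) _ _ fun _ => rfl).symm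

section InnerProductSpace

variable {E : Type*} [NormedAddCommGroup E] [InnerProductSpace ℝ E] {x : ι → E}

lemma expect_inner_eq_zero_of_sum_eq_zero (hx : ∑ a, x a = 0) (w : E) :
    𝔼 a, inner ℝ (x a) w = 0 := by
  rw [Finset.expect_eq_sum_div_card, ← sum_inner, hx, inner_zero_left, zero_div]

lemma expect_expect_norm_sub_sq [Nonempty ι] (hx : ∑ a, x a = 0) :
    𝔼 a, 𝔼 b, ‖x a - x b‖ ^ 2 = 2 * 𝔼 a, ‖x a‖ ^ 2 := by
  have hcross : ∀ a, 𝔼 b, inner ℝ (x a) (x b) = 0 := fun a => by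
    simp_rw [real_inner_comm _ (x a)]
    exact expect_inner_eq_zero_of_sum_eq_zero hx (x a)
  simp_rw [norm_sub_sq_real, Finset.expect_add_distrib, Finset.expect_sub_distrib,
    ← Finset.mul_expect, hcross, Fintype.expect_const, mul_zero, sub_zero]
  ring

lemma expect_norm_sum_sq [Nonempty ι] (hx : ∑ a, x a = 0) (n : ℕ) :
    𝔼 ω : Fin n → ι, ‖∑ k, x (ω k)‖ ^ 2 = n * 𝔼 a, ‖x a‖ ^ 2 := by
  induction n with
  | zero => simp
  | succ n ih =>
    have hcross : 𝔼 i, 𝔼 ω' : Fin n → ι, inner ℝ (x i) (∑ k, x (ω' k)) = 0 := by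
      rw [Finset.expect_comm]
      exact Finset.expect_eq_zero fun ω' _ => expect_inner_eq_zero_of_sum_eq_zero hx _
    rw [expect_fin_cons]
    simp_rw [Fin.sum_univ_succ, Fin.cons_zero, Fin.cons_succ, norm_add_sq_real,
      Finset.expect_add_distrib, ← Finset.mul_expect, hcross, ih, Fintype.expect_const]
    push_cast
    ring

end InnerProductSpace

lemma expect_exp_mul_sub_expect_le [Nonempty ι] {φ : ι → ℝ} {ρ : ι → ι → ℝ} {l : ℝ}
    (hl : 0 ≤ l) (hφ : ∀ a b, |φ a - φ b| ≤ ρ a b) (hlρ : ∀ a b, l * ρ a b ≤ 1) :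
    𝔼 a, exp (l * (φ a - 𝔼 b, φ b)) ≤ exp (l ^ 2 / 2 * 𝔼 a, 𝔼 b, ρ a b ^ 2) := by
  set ψ : ι → ℝ := fun a => φ a - 𝔼 b, φ b
  have hψ_sum : ∑ a, ψ a = 0 := by
    simp [ψ, Finset.sum_sub_distrib, ← Fintype.card_mul_expect]
  have hψ_expect : 𝔼 a, ψ a = 0 := by
    rw [Finset.expect_eq_sum_div_card, hψ_sum, zero_div]
  have hψ : ∀ a, ψ a = 𝔼 b, (φ a - φ b) := fun a => by
    rw [Finset.expect_sub_distrib, Fintype.expect_const]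
  have hlψ : ∀ a, |l * ψ a| ≤ 1 := fun a => calc
    |l * ψ a| = l * |𝔼 b, (φ a - φ b)| := by rw [abs_mul, abs_of_nonneg hl, hψ]
    _ ≤ l * 𝔼 b, ρ a b := mul_le_mul_of_nonneg_left
        ((Finset.abs_expect_le _ _).trans (Finset.expect_le_expect fun b _ => hφ a b)) hl
    _ = 𝔼 b, l * ρ a b := Finset.mul_expect _ _ _
    _ ≤ 1 := Finset.expect_le univ_nonempty fun b _ => hlρ a b
  have hvar : 2 * 𝔼 a, ψ a ^ 2 ≤ 𝔼 a, 𝔼 b, ρ a b ^ 2 := by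
    have h := expect_expect_norm_sub_sq hψ_sum
    simp only [Real.norm_eq_abs, sq_abs] at h
    rw [← h]
    refine Finset.expect_le_expect fun a _ => Finset.expect_le_expect fun b _ => ?_
    rw [sub_sub_sub_cancel_right, ← sq_abs]
    exact pow_le_pow_left₀ (abs_nonneg _) (hφ a b) 2
  calc 𝔼 a, exp (l * ψ a)
      ≤ 𝔼 a, (1 + l * ψ a + (l * ψ a) ^ 2) := Finset.expect_le_expect fun a _ => by
        linarith [(abs_le.mp (abs_exp_sub_one_sub_id_le (hlψ a))).2]
    _ = l ^ 2 * 𝔼 a, ψ a ^ 2 + 1 := by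
        simp_rw [Finset.expect_add_distrib, mul_pow, ← Finset.mul_expect, hψ_expect,
          Fintype.expect_const]
        ring
    _ ≤ l ^ 2 / 2 * 𝔼 a, 𝔼 b, ρ a b ^ 2 + 1 := by nlinarith [sq_nonneg l]
    _ ≤ exp (l ^ 2 / 2 * 𝔼 a, 𝔼 b, ρ a b ^ 2) := add_one_le_exp _

namespace HasBoundedDifferences

lemma expect_cons [Nonempty ι] {n : ℕ} {ρ : ι → ι → ℝ} {f : (Fin (n + 1) → ι) → ℝ}
    (hf : HasBoundedDifferences ρ f) :
    HasBoundedDifferences ρ fun ω : Fin n → ι => 𝔼 i, f (Fin.cons i ω) := by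
  intro ω k a b
  rw [← Finset.expect_sub_distrib]
  refine (Finset.abs_expect_le _ _).trans (Finset.expect_le univ_nonempty fun i _ => ?_)
  simpa only [Fin.cons_update] using hf (Fin.cons i ω) k.succ a b

theorem expect_exp_mul_sub_expect_le [Nonempty ι] {ρ : ι → ι → ℝ} {l : ℝ} (hl : 0 ≤ l)
    (hlρ : ∀ a b, l * ρ a b ≤ 1) {n : ℕ} {f : (Fin n → ι) → ℝ}
    (hf : HasBoundedDifferences ρ f) :
    𝔼 ω, exp (l * (f ω - 𝔼 ω', f ω')) ≤ exp (n * (l ^ 2 / 2 * 𝔼 a, 𝔼 b, ρ a b ^ 2)) := by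
  induction n with
  | zero => simp
  | succ n ih =>
    set K := l ^ 2 / 2 * 𝔼 a, 𝔼 b, ρ a b ^ 2
    set F : (Fin n → ι) → ℝ := fun ω' => 𝔼 i, f (Fin.cons i ω')
    have hmean : 𝔼 ω, f ω = 𝔼 ω', F ω' := by rw [expect_fin_cons, Finset.expect_comm]
    calc 𝔼 ω, exp (l * (f ω - 𝔼 ω', f ω'))
        = 𝔼 ω', exp (l * (F ω' - 𝔼 ω'', F ω'')) *
            𝔼 i, exp (l * (f (Fin.cons i ω') - F ω')) := by
          rw [expect_fin_cons, Finset.expect_comm, hmean]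
          refine Finset.expect_congr rfl fun ω' _ => ?_
          rw [Finset.mul_expect]
          refine Finset.expect_congr rfl fun i _ => ?_
          rw [← exp_add]
          ring_nf
      _ ≤ 𝔼 ω', exp (l * (F ω' - 𝔼 ω'', F ω'')) * exp K :=
          Finset.expect_le_expect fun ω' _ => mul_le_mul_of_nonneg_left
            (_root_.expect_exp_mul_sub_expect_le hl (hf.abs_sub_cons_le ω') hlρ) (exp_nonneg _)
      _ ≤ exp (n * K) * exp K := by
          rw [← Finset.expect_mul]
          exact mul_le_mul_of_nonneg_right (ih hf.expect_cons) (exp_nonneg _)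
      _ = exp ((n + 1 : ℕ) * K) := by
          rw [← exp_add]
          push_cast
          ring_nf

end HasBoundedDifferences

lemma card_filter_lt_le_card_mul_expect_exp (f : ι → ℝ) (a : ℝ) {l : ℝ} (hl : 0 ≤ l) :
    (#{ω | a < f ω} : ℝ) ≤ Fintype.card ι * 𝔼 ω, exp (l * (f ω - a)) := by
  rw [Fintype.card_mul_expect]
  calc (#{ω | a < f ω} : ℝ) = ∑ ω with a < f ω, 1 := by simp
    _ ≤ ∑ ω with a < f ω, exp (l * (f ω - a)) := Finset.sum_le_sum fun ω hω =>
        one_le_exp (mul_nonneg hl (sub_nonneg.mpr (Finset.mem_filter.mp hω).2.le))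
    _ ≤ ∑ ω, exp (l * (f ω - a)) :=
        Finset.sum_le_sum_of_subset_of_nonneg (Finset.filter_subset _ _)
          fun _ _ _ => exp_nonneg _

lemma card_filter_lt_le_of_expect_exp_le (f : ι → ℝ) {μ a l K : ℝ} (hl : 0 ≤ l)
    (hμ : 𝔼 ω, f ω ≤ μ) (hK : 𝔼 ω, exp (l * (f ω - 𝔼 ω', f ω')) ≤ exp K) :
    (#{ω | a < f ω} : ℝ) ≤ Fintype.card ι * exp (l * (μ - a) + K) := by
  calc (#{ω | a < f ω} : ℝ)
      ≤ Fintype.card ι * 𝔼 ω, exp (l * (f ω - a)) := card_filter_lt_le_card_mul_expect_exp f a hl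
    _ = Fintype.card ι * (exp (l * (𝔼 ω, f ω - a)) * 𝔼 ω, exp (l * (f ω - 𝔼 ω', f ω'))) := by
        rw [Finset.mul_expect _ _ (exp _)]
        congr 1
        refine Finset.expect_congr rfl fun ω _ => ?_
        rw [← exp_add]
        ring_nf
    _ ≤ Fintype.card ι * exp (l * (μ - a) + K) := by
        rw [exp_add]
        gcongr

section Concentration

variable {E : Type*} [NormedAddCommGroup E] [InnerProductSpace ℝ E] {x : ι → E} [Nonempty ι]

lemma expect_norm_sum_le (hx : ∑ a, x a = 0) (n : ℕ) :
    𝔼 ω : Fin n → ι, ‖∑ k, x (ω k)‖ ≤ √(n * 𝔼 a, ‖x a‖ ^ 2) := by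
  refine (le_abs_self _).trans (abs_le_sqrt ?_)
  have := Finset.expect_mul_sq_le_sq_mul_sq univ (fun ω : Fin n → ι => ‖∑ k, x (ω k)‖) 1
  simp_rw [Pi.one_apply, mul_one, one_pow, Fintype.expect_const, mul_one] at this
  rwa [← expect_norm_sum_sq hx]

lemma expect_exp_mul_norm_sum_sub_le (hx : ∑ a, x a = 0) {B v l : ℝ}
    (hB : ∀ a, ‖x a‖ ^ 2 ≤ B) (hv : 𝔼 a, ‖x a‖ ^ 2 ≤ v) (hl : 0 ≤ l) (hlB : l * (2 * √B) ≤ 1)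
    (n : ℕ) :
    𝔼 ω : Fin n → ι, exp (l * (‖∑ k, x (ω k)‖ - 𝔼 ω' : Fin n → ι, ‖∑ k, x (ω' k)‖))
      ≤ exp (n * l ^ 2 * v) := by
  have hnorm : ∀ a, ‖x a‖ ≤ √B := fun a => (abs_norm (x a)).symm.trans_le (abs_le_sqrt (hB a))
  have hlρ : ∀ a b, l * ‖x a - x b‖ ≤ 1 := fun a b =>
    (mul_le_mul_of_nonneg_left ((norm_sub_le _ _).trans (by linarith [hnorm a, hnorm b])) hl).trans
      hlB
  refine ((hasBoundedDifferences_norm_sum x n).expect_exp_mul_sub_expect_le hl hlρ).trans ?_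
  rw [expect_expect_norm_sub_sq hx, exp_le_exp]
  have := mul_le_mul_of_nonneg_left hv (by positivity : (0 : ℝ) ≤ n * l ^ 2)
  linarith

theorem card_lt_norm_sum_le (hx : ∑ a, x a = 0) {B v t : ℝ} (m : ℕ) (hB : ∀ a, ‖x a‖ ^ 2 ≤ B)
    (hv : 𝔼 a, ‖x a‖ ^ 2 ≤ v) (ht : 0 ≤ t) (htB : 4 * t * B ≤ m * v) :
    (#{ω : Fin m → ι | (1 + 2 * √t) * √(m * v) < ‖∑ k, x (ω k)‖} : ℝ)
      ≤ exp (-t) * Fintype.card ι ^ m := by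
  set σ := √(m * v)
  set f : (Fin m → ι) → ℝ := fun ω => ‖∑ k, x (ω k)‖
  have hmean : 𝔼 ω, f ω ≤ σ := (expect_norm_sum_le hx m).trans (sqrt_le_sqrt (by gcongr))
  rcases (sqrt_nonneg (m * v)).eq_or_lt with hσ | hσ
  · have hf : f = 0 := (Fintype.expect_eq_zero_iff_of_nonneg fun ω => norm_nonneg _).mp
      (le_antisymm (hσ ▸ hmean) (Finset.expect_nonneg fun ω _ => norm_nonneg _))
    have hempty : ({ω | (1 + 2 * √t) * σ < f ω} : Finset (Fin m → ι)) = ∅ :=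
      Finset.filter_false_of_mem fun ω _ => by
        simp only [hf, Pi.zero_apply, not_lt]
        positivity
    rw [hempty, Finset.card_empty, Nat.cast_zero]
    positivity
  · set l := √t / σ
    have hl : 0 ≤ l := by positivity
    have hmv : 0 < m * v := sqrt_pos.mp hσ
    have hσsq : σ ^ 2 = m * v := sq_sqrt hmv.le
    have hB0 : 0 ≤ B := (sq_nonneg _).trans (hB (Classical.arbitrary ι))
    have hlB : l * (2 * √B) ≤ 1 := by
      rw [div_mul_eq_mul_div, div_le_one hσ, le_sqrt (by positivity) hmv.le, mul_pow, mul_pow,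
        sq_sqrt ht, sq_sqrt hB0]
      linarith
    have hexp : l * (σ - (1 + 2 * √t) * σ) + m * l ^ 2 * v = -t := by
      have ht2 : √t ^ 2 = t := sq_sqrt ht
      simp only [l]
      field_simp
      rw [div_eq_iff (by positivity)]
      linear_combination (m * v - 2 * σ ^ 2) * ht2 - t * hσsq
    calc (#{ω | (1 + 2 * √t) * σ < f ω} : ℝ)
        ≤ Fintype.card (Fin m → ι) * exp (l * (σ - (1 + 2 * √t) * σ) + m * l ^ 2 * v) :=
          card_filter_lt_le_of_expect_exp_le f hl hmean
            (expect_exp_mul_norm_sum_sub_le hx hB hv hl hlB m)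
      _ = exp (-t) * Fintype.card ι ^ m := by
          rw [hexp, Fintype.card_fun, Fintype.card_fin, Nat.cast_pow, mul_comm]

theorem one_sub_exp_neg_le_ncard_norm_sum_le (hx : ∑ a, x a = 0) {B v t : ℝ} (m : ℕ)
    (hB : ∀ a, ‖x a‖ ^ 2 ≤ B) (hv : 𝔼 a, ‖x a‖ ^ 2 ≤ v) (ht : 0 ≤ t) (htB : 4 * t * B ≤ m * v) :
    1 - exp (-t) ≤ ({ω : Fin m → ι | ‖∑ k, x (ω k)‖ ≤ (1 + 2 * √t) * √(m * v)}.ncard : ℝ)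
      / Fintype.card ι ^ m := by
  classical
  have h := one_sub_le_ncard_div_card (Ω := Fin m → ι)
    (p := fun ω => ‖∑ k, x (ω k)‖ ≤ (1 + 2 * √t) * √(m * v)) (δ := exp (-t))
  simp only [not_le, Fintype.card_fun, Fintype.card_fin, Nat.cast_pow] at h
  exact h (card_lt_norm_sum_le hx m hB hv ht htB)

end Concentration

end Sampling

lemma sum_mul_transpose_apply_sq {m n R : Type*} [Fintype m] [Fintype n] [DecidableEq n]
    [CommSemiring R] {U : Matrix m n R} (hU : Uᵀ * U = 1) (i : m) :
    ∑ j, (U * Uᵀ) j i ^ 2 = ∑ l, U i l ^ 2 := by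
  have h : (U * Uᵀ)ᵀ * (U * Uᵀ) = U * Uᵀ := by
    rw [transpose_mul, transpose_transpose, Matrix.mul_assoc, ← Matrix.mul_assoc Uᵀ, hU,
      Matrix.one_mul]
  have hii := congrFun (congrFun h i) i
  rw [Matrix.mul_apply] at hii
  simpa only [transpose_apply, ← sq, Matrix.mul_apply] using hii

lemma sum_row_sq_le_of_mem_upperBounds {N d : ℕ} (hd : 0 < d) {U : Matrix (Fin N) (Fin d) ℝ}
    (hU : Uᵀ * U = 1) {μS : ℝ}
    (hμS : μS ∈ upperBounds (Set.range fun i : Fin N => (N / d : ℝ) * ∑ j, (U * Uᵀ) j i ^ 2))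
    (i : Fin N) : ∑ l, U i l ^ 2 ≤ d * μS / N := by
  have h : (N / d : ℝ) * ∑ j, (U * Uᵀ) j i ^ 2 ≤ μS := hμS ⟨i, rfl⟩
  rw [sum_mul_transpose_apply_sq hU, div_mul_eq_mul_div, div_le_iff₀ (Nat.cast_pos.mpr hd)] at h
  rw [le_div_iff₀ (Nat.cast_pos.mpr i.pos)]
  linarith

section WeightedRow

variable {ι κ n : Type*} (U : Matrix ι n ℝ) (y : ι → ℝ)

def weightedRow (i : ι) : EuclideanSpace ℝ n :=
  y i • WithLp.toLp 2 (U i)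

lemma norm_weightedRow_sq [Fintype n] (i : ι) :
    ‖weightedRow U y i‖ ^ 2 = y i ^ 2 * ∑ l, U i l ^ 2 := by
  simp [weightedRow, EuclideanSpace.real_norm_sq_eq, mul_pow, Finset.mul_sum]

lemma sum_weightedRow_comp [Fintype κ] (ω : κ → ι) :
    ∑ k, weightedRow U y (ω k)
      = WithLp.toLp 2 ((of fun k l => U (ω k) l)ᵀ *ᵥ fun k => y (ω k)) := by
  rw [mulVec_transpose, vecMul_eq_sum, WithLp.toLp_sum]
  rfl

lemma norm_sum_weightedRow_comp_sq [Fintype n] [Fintype κ] (ω : κ → ι) :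
    ‖∑ k, weightedRow U y (ω k)‖ ^ 2
      = ∑ l, ((of fun k l => U (ω k) l)ᵀ *ᵥ fun k => y (ω k)) l ^ 2 := by
  rw [sum_weightedRow_comp, EuclideanSpace.real_norm_sq_eq]

variable {U y}

lemma norm_weightedRow_sq_le [Fintype n] {c ymax : ℝ} (hU : ∀ i, ∑ l, U i l ^ 2 ≤ c)
    (hy : ∀ i, y i ^ 2 ≤ ymax) (i : ι) : ‖weightedRow U y i‖ ^ 2 ≤ c * ymax := by
  rw [norm_weightedRow_sq, mul_comm]
  exact mul_le_mul (hU i) (hy i) (sq_nonneg _)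
    ((Finset.sum_nonneg fun l _ => sq_nonneg _).trans (hU i))

variable [Fintype ι]

lemma expect_norm_weightedRow_sq_le [Fintype n] {c : ℝ} (hU : ∀ i, ∑ l, U i l ^ 2 ≤ c) :
    𝔼 i, ‖weightedRow U y i‖ ^ 2 ≤ c * 𝔼 i, y i ^ 2 := by
  rw [Finset.mul_expect]
  refine Finset.expect_le_expect fun i _ => ?_
  rw [norm_weightedRow_sq, mul_comm]
  exact mul_le_mul_of_nonneg_right (hU i) (sq_nonneg _)

lemma sum_weightedRow_eq_zero (hy : Uᵀ *ᵥ y = 0) : ∑ i, weightedRow U y i = 0 :=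
  (sum_weightedRow_comp U y id).trans (congrArg (WithLp.toLp 2) hy)

end WeightedRow

theorem elementwise_sampling_cross_term_bound_general
    (N d m : ℕ) (hN : 0 < N) (hd : 0 < d)
    (δ : ℝ) (hδ : 0 < δ)
    (U : Matrix (Fin N) (Fin d) ℝ)
    (hU : Uᵀ * U = 1)
    (μS : ℝ)
    (hμS : IsGreatest
      (Set.range fun i : Fin N => (N / d : ℝ) * ∑ j, ((U * Uᵀ) j i) ^ 2) μS)
    (y : Fin N → ℝ) (hy : y ≠ 0)
    (hyperp : Uᵀ *ᵥ y = 0)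
    (ymax : ℝ)
    (hymax : IsGreatest (Set.range fun i : Fin N => y i ^ 2) ymax)
    (hsize : 4 * (N * ymax / ∑ i, y i ^ 2) * Real.log (1 / δ) ≤ m)
    (β : ℝ)
    (hβ : β = (1 + 2 * Real.sqrt (Real.log (1 / δ))) ^ 2) :
    1 - δ ≤
      (Set.ncard {ω : Fin m → Fin N |
        let UΩ : Matrix (Fin m) (Fin d) ℝ := Matrix.of fun k l => U (ω k) l
        let yΩ : Fin m → ℝ := fun k => y (ω k)
        (∑ l, (UΩᵀ *ᵥ yΩ) l ^ 2) ≤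
          β * (m * d * μS / (N : ℝ) ^ 2) * ∑ i, y i ^ 2} : ℝ) / (N : ℝ) ^ m := by
  classical
  rcases le_or_gt 1 δ with hδ1 | hδ1
  · exact (sub_nonpos.mpr hδ1).trans (by positivity)
  have : Nonempty (Fin N) := ⟨⟨0, hN⟩⟩
  set t := log (1 / δ)
  have ht : 0 ≤ t := log_nonneg (one_le_one_div hδ hδ1.le)
  set c := d * μS / N
  have hrow := sum_row_sq_le_of_mem_upperBounds hd hU hμS.2
  have hc : 0 ≤ c := (Finset.sum_nonneg fun l _ => sq_nonneg (U ⟨0, hN⟩ l)).trans (hrow _)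
  have hS : 0 < ∑ i, y i ^ 2 := by
    obtain ⟨i, hi⟩ := Function.ne_iff.mp hy
    exact Finset.sum_pos' (fun j _ => sq_nonneg _) ⟨i, mem_univ _, pow_two_pos_of_ne_zero hi⟩
  have htB : 4 * t * (c * ymax) ≤ m * (c * 𝔼 i, y i ^ 2) := by
    rw [Fintype.expect_eq_sum_div_card, Fintype.card_fin]
    calc 4 * t * (c * ymax)
        = 4 * (N * ymax / ∑ i, y i ^ 2) * t * (c * ((∑ i, y i ^ 2) / N)) := by
          field_simp
      _ ≤ m * (c * ((∑ i, y i ^ 2) / N)) := by gcongr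
  convert one_sub_exp_neg_le_ncard_norm_sum_le (sum_weightedRow_eq_zero hyperp) m
    (norm_weightedRow_sq_le hrow fun i => hymax.2 ⟨i, rfl⟩) (expect_norm_weightedRow_sq_le hrow)
    ht htB using 3
  · simp only [t, one_div, log_inv, neg_neg, exp_log hδ]
  · congr 1
    ext ω
    dsimp only [Set.mem_ofPred_eq]
    rw [← norm_sum_weightedRow_comp_sq, ← sq_le_sq₀ (norm_nonneg _) (by positivity), mul_pow,
      sq_sqrt (by positivity), ← hβ, Fintype.expect_eq_sum_div_card, Fintype.card_fin]
    congr! 1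
    ring
  · simp

/-- **Lemma 5 (elementwise cross-term bound).**
Sampling with replacement is modeled by the uniform distribution on the finite
sample space `Fin m → Fin N`, probabilities being `#(event) / N ^ m`. -/
theorem elementwise_sampling_cross_term_bound
    (N d m : ℕ) (hN : 0 < N) (hd : 0 < d) (hdN : d ≤ N) (hm : 0 < m)
    (δ : ℝ) (hδ : 0 < δ)
    (U : Matrix (Fin N) (Fin d) ℝ)
    (hU : Uᵀ * U = 1)
    (μS : ℝ)
    (hμS : IsGreatest
      (Set.range fun i : Fin N => (N / d : ℝ) * ∑ j, ((U * Uᵀ) j i) ^ 2) μS)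
    (y : Fin N → ℝ) (hy : y ≠ 0)
    (hyperp : Uᵀ *ᵥ y = 0)
    (ymax : ℝ)
    (hymax : IsGreatest (Set.range fun i : Fin N => y i ^ 2) ymax)
    (hsize : 4 * (N * ymax / ∑ i, y i ^ 2) * Real.log (1 / δ) ≤ m)
    (β : ℝ)
    (hβ : β = (1 + 2 * Real.sqrt (Real.log (1 / δ))) ^ 2) :
    1 - δ ≤
      (Set.ncard {ω : Fin m → Fin N |
        let UΩ : Matrix (Fin m) (Fin d) ℝ := Matrix.of fun k l => U (ω k) l
        let yΩ : Fin m → ℝ := fun k => y (ω k)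
        (∑ l, (UΩᵀ *ᵥ yΩ) l ^ 2) ≤
          β * (m * d * μS / (N : ℝ) ^ 2) * ∑ i, y i ^ 2} : ℝ) / (N : ℝ) ^ m :=
  elementwise_sampling_cross_term_bound_general N d m hN hd δ hδ U hU μS hμS y hy hyperp ymax hymax
    hsize β hβ
end

section
/- Vector Bernstein inequality (Lemma 8). Let x₁, …, x_m be independent zero-mean random vectors in ℝ^d with Σ_{k=1}^m E[‖x_k‖₂²] ≤ M for some M > 0, and suppose ‖x_k‖₂ ≤ L almost surely for all k, where L > 0. Then for any τ with 0 < τ ≤ M/L, P[ ‖Σ_{k=1}^m x_k‖₂ ≥ √M + τ ] ≤ exp( −τ²/(4M) ). -/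
/-!
Write `S = Y + B` with `Y` one summand and `B` the sum of the others, independent of `Y`, and
fix a shift `c`. Conditioning on `Y`, the deviation of `‖c + S‖` from its mean splits into the deviation of
`‖(c + Y) + B‖` from its conditional mean `h Y`, with `h y = E ‖c + y + B‖`, plus the deviation
of `h Y` from its mean. Since `h` is 1-Lipschitz, `h Y` varies by at most `2L` and has variance
at most `E ‖Y‖²`, so the one-sided Bernstein bound `exp x ≤ 1 + x + x²` (for `x ≤ 1`) controls
its moment generating function by `exp (t² E ‖Y‖²)` as long as `2 |t| L ≤ 1`. Inducting over the
summands, uniformly in the shift `c`, gives `E exp (t (‖S‖ - E ‖S‖)) ≤ exp (t² M)`.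
Independence and zero means give `E ‖S‖² = ∑ E ‖x_k‖² ≤ M`, hence `E ‖S‖ ≤ √M`, and the
Chernoff bound at `t = τ / (2M)`, admissible exactly when `τ ≤ M / L`, yields `exp (-τ² / (4M))`.
-/

open MeasureTheory ProbabilityTheory

theorem Real.exp_le_one_add_add_sq {x : ℝ} (hx : x ≤ 1) : Real.exp x ≤ 1 + x + x ^ 2 := by
  rcases le_total 0 x with h0 | h0
  · have h := Real.exp_bound' h0 hx zero_lt_three
    norm_num [Finset.sum_range, Fin.sum_univ_three, Nat.factorial] at h
    nlinarith [pow_le_pow_of_le_one h0 hx (by norm_num : 2 ≤ 3)]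
  · -- invert `1 - x + x² / 2 ≤ exp (-x)`, using `(1 + x + x²) (1 - x + x² / 2) ≥ 1` for `x ≤ 0`
    have hq : 1 - x + x ^ 2 / 2 ≤ Real.exp (-x) := by
      have := Real.quadratic_le_exp_of_nonneg (neg_nonneg.2 h0)
      rwa [neg_sq, ← sub_eq_add_neg] at this
    have hprod : Real.exp x * Real.exp (-x) = 1 := by rw [← Real.exp_add]; simp
    nlinarith [Real.exp_pos x, sq_nonneg x, mul_nonneg (sq_nonneg x) (neg_nonneg.2 h0)]

theorem MeasureTheory.ae_norm_finsetSum_le {Ω ι E : Type*} [MeasurableSpace Ω] {μ : Measure Ω}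
    [NormedAddCommGroup E] {X : ι → Ω → E} {L : ℝ} (hXL : ∀ k, ∀ᵐ ω ∂μ, ‖X k ω‖ ≤ L)
    (s : Finset ι) : ∀ᵐ ω ∂μ, ‖(∑ k ∈ s, X k) ω‖ ≤ s.card * L := by
  filter_upwards [(Filter.eventually_all_finset s).2 fun k _ => hXL k] with ω hω
  rw [Finset.sum_apply]
  exact (norm_sum_le _ _).trans (by simpa using Finset.sum_le_card_nsmul s _ L hω)

namespace ProbabilityTheory

variable {Ω : Type*} [MeasurableSpace Ω] {μ : Measure Ω} [IsProbabilityMeasure μ]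

theorem sq_integral_le_integral_sq {f : Ω → ℝ} (hf : MemLp f 2 μ) :
    (∫ ω, f ω ∂μ) ^ 2 ≤ ∫ ω, f ω ^ 2 ∂μ := by
  have h := variance_nonneg f μ
  rw [variance_eq_sub hf] at h
  simpa using h

theorem mgf_le_exp_mul_integral_sq {Z : Ω → ℝ} {t : ℝ} (hZ : MemLp Z 2 μ) (hZ0 : μ[Z] = 0)
    (htZ : ∀ᵐ ω ∂μ, t * Z ω ≤ 1) : mgf Z μ t ≤ Real.exp (t ^ 2 * ∫ ω, Z ω ^ 2 ∂μ) := by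
  have hZi : Integrable Z μ := hZ.integrable one_le_two
  have hexp : Integrable (fun ω => Real.exp (t * Z ω)) μ := by
    simpa using integrable_exp_mul_of_le 1 1 zero_le_one (hZ.aemeasurable.const_mul t) htZ
  have hquad : Integrable (fun ω => 1 + t * Z ω + t ^ 2 * Z ω ^ 2) μ :=
    ((integrable_const 1).add (hZi.const_mul t)).add (hZ.integrable_sq.const_mul _)
  calc mgf Z μ t ≤ ∫ ω, (1 + t * Z ω + t ^ 2 * Z ω ^ 2) ∂μ := by
        refine integral_mono_ae hexp hquad ?_
        filter_upwards [htZ] with ω hω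
        simpa [mul_pow] using Real.exp_le_one_add_add_sq hω
    _ = 1 + t ^ 2 * ∫ ω, Z ω ^ 2 ∂μ := by
        rw [integral_add (f := fun ω => 1 + t * Z ω) ((integrable_const 1).add (hZi.const_mul t))
          (hZ.integrable_sq.const_mul _),
          integral_add (f := fun _ => (1 : ℝ)) (integrable_const 1) (hZi.const_mul t),
          integral_const_mul, integral_const_mul, hZ0]
        simp
    _ ≤ Real.exp (t ^ 2 * ∫ ω, Z ω ^ 2 ∂μ) := by
        linarith [Real.add_one_le_exp (t ^ 2 * ∫ ω, Z ω ^ 2 ∂μ)]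

theorem mgf_sub_integral_le_exp_mul_variance {W : Ω → ℝ} {a b t : ℝ}
    (hW : AEStronglyMeasurable W μ) (hWb : ∀ᵐ ω ∂μ, |W ω - a| ≤ b) (htb : 2 * |t| * b ≤ 1) :
    mgf (fun ω => W ω - μ[W]) μ t ≤ Real.exp (t ^ 2 * Var[W; μ]) := by
  have hW2 : MemLp W 2 μ := by
    refine MemLp.of_bound hW (|a| + b) ?_
    filter_upwards [hWb] with ω hω
    rw [Real.norm_eq_abs]
    linarith [abs_sub_abs_le_abs_sub (W ω) a]
  have hmean : |μ[W] - a| ≤ b := by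
    have h := norm_integral_le_of_norm_le_const (μ := μ) (f := fun ω => W ω - a)
      (hWb.mono fun ω hω => by rwa [Real.norm_eq_abs])
    rwa [integral_sub (hW2.integrable one_le_two) (integrable_const a), integral_const,
      probReal_univ, one_smul, mul_one] at h
  rw [variance_eq_integral hW.aemeasurable]
  refine mgf_le_exp_mul_integral_sq (hW2.sub (memLp_const _)) ?_ ?_
  · rw [integral_sub (hW2.integrable one_le_two) (integrable_const _), integral_const,
      probReal_univ, one_smul, sub_self]
  · filter_upwards [hWb] with ω hω
    have : |W ω - μ[W]| ≤ 2 * b := by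
      calc |W ω - μ[W]| = |(W ω - a) - (μ[W] - a)| := by ring_nf
        _ ≤ |W ω - a| + |μ[W] - a| := abs_sub _ _
        _ ≤ 2 * b := by linarith
    calc t * (W ω - μ[W]) ≤ |t| * |W ω - μ[W]| := by
          rw [← abs_mul]; exact le_abs_self _
      _ ≤ |t| * (2 * b) := by gcongr
      _ ≤ 1 := by linarith

theorem _root_.LipschitzWith.variance_comp_le {E : Type*} [NormedAddCommGroup E]
    {f : E → ℝ} {K : NNReal} (hf : LipschitzWith K f) {Y : Ω → E} (hY : MemLp Y 2 μ) :
    Var[fun ω => f (Y ω); μ] ≤ K ^ 2 * ∫ ω, ‖Y ω‖ ^ 2 ∂μ := by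
  have hpt : ∀ y, (f y - f 0) ^ 2 ≤ K ^ 2 * ‖y‖ ^ 2 := fun y => by
    have := hf.dist_le_mul y 0
    rw [Real.dist_eq, dist_zero_right] at this
    rw [← mul_pow, ← sq_abs]
    exact pow_le_pow_left₀ (abs_nonneg _) this 2
  have hfY : AEStronglyMeasurable (fun ω => f (Y ω)) μ :=
    hf.continuous.comp_aestronglyMeasurable hY.aestronglyMeasurable
  rw [← variance_sub_const hfY (f 0)]
  refine (variance_le_expectation_sq (hfY.sub aestronglyMeasurable_const)).trans ?_
  rw [← integral_const_mul]
  exact integral_mono_of_nonneg (.of_forall fun ω => sq_nonneg _)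
    ((hY.integrable_norm_pow two_ne_zero).const_mul _) (.of_forall fun ω => hpt (Y ω))

theorem lipschitzWith_integral_norm_add {E : Type*} [NormedAddCommGroup E] {B : Ω → E}
    (hB : Integrable B μ) : LipschitzWith 1 (fun y => ∫ ω, ‖y + B ω‖ ∂μ) := by
  have hint : ∀ y : E, Integrable (fun ω => ‖y + B ω‖) μ := fun y =>
    ((integrable_const y).add hB).norm
  refine LipschitzWith.of_dist_le_mul fun y y' => ?_
  rw [Real.dist_eq, ← integral_sub (hint y) (hint y'), NNReal.coe_one, one_mul]
  have h := norm_integral_le_of_norm_le_const (μ := μ)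
    (f := fun ω => ‖y + B ω‖ - ‖y' + B ω‖) (C := dist y y') (.of_forall fun ω => by
      simpa [dist_eq_norm] using abs_norm_sub_norm_le (y + B ω) (y' + B ω))
  rwa [probReal_univ, mul_one, Real.norm_eq_abs] at h

theorem IndepFun.integral_comp_eq_integral_integral {α β E : Type*} [MeasurableSpace α]
    [MeasurableSpace β] [NormedAddCommGroup E] [NormedSpace ℝ E] {Y : Ω → α} {B : Ω → β}
    (hYB : IndepFun Y B μ) (hY : AEMeasurable Y μ) (hB : AEMeasurable B μ) {F : α → β → E}
    (hF : AEStronglyMeasurable (Function.uncurry F) ((μ.map Y).prod (μ.map B)))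
    (hFint : Integrable (fun ω => F (Y ω) (B ω)) μ) :
    ∫ ω, F (Y ω) (B ω) ∂μ = ∫ ω, ∫ ω', F (Y ω) (B ω') ∂μ ∂μ := by
  have hmap : μ.map (fun ω => (Y ω, B ω)) = (μ.map Y).prod (μ.map B) :=
    (indepFun_iff_map_prod_eq_prod_map_map hY hB).1 hYB
  have hF' : AEStronglyMeasurable (Function.uncurry F) (μ.map fun ω => (Y ω, B ω)) :=
    hmap ▸ hF
  have hFint' : Integrable (Function.uncurry F) ((μ.map Y).prod (μ.map B)) :=
    hmap ▸ (integrable_map_measure hF' (hY.prodMk hB)).2 hFint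
  have hsection : ∀ᵐ ω ∂μ, AEStronglyMeasurable (F (Y ω)) (μ.map B) :=
    ae_of_ae_map hY hF.prodMk_left
  calc ∫ ω, F (Y ω) (B ω) ∂μ = ∫ p, Function.uncurry F p ∂(μ.map fun ω => (Y ω, B ω)) :=
        (integral_map (hY.prodMk hB) hF').symm
    _ = ∫ y, ∫ b, F y b ∂(μ.map B) ∂(μ.map Y) := by rw [hmap, integral_prod _ hFint']; rfl
    _ = ∫ ω, ∫ b, F (Y ω) b ∂(μ.map B) ∂μ := integral_map hY hF.integral_prod_right'
    _ = ∫ ω, ∫ ω', F (Y ω) (B ω') ∂μ ∂μ := integral_congr_ae <| by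
        filter_upwards [hsection] with ω hω using integral_map hB hω

section NormAddDeviation

variable {E : Type*} [NormedAddCommGroup E]

/-- The shift `c` is what lets the induction over the summands absorb the part of the sum that
has already been conditioned on. -/
noncomputable def normAddDeviation (μ : Measure Ω) (S : Ω → E) (c : E) (ω : Ω) : ℝ :=
  ‖c + S ω‖ - ∫ ω', ‖c + S ω'‖ ∂μ

theorem integrable_exp_mul_normAddDeviation [MeasurableSpace E] [OpensMeasurableSpace E]
    {S : Ω → E} (hS : AEMeasurable S μ) {R : ℝ} (hSR : ∀ᵐ ω ∂μ, ‖S ω‖ ≤ R) (t : ℝ) (c : E) :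
    Integrable (fun ω => Real.exp (t * normAddDeviation μ S c ω)) μ := by
  refine integrable_exp_mul_of_mem_Icc (a := -∫ ω, ‖c + S ω‖ ∂μ)
    (b := ‖c‖ + R - ∫ ω, ‖c + S ω‖ ∂μ)
    (((continuous_const_add c).norm.measurable.comp_aemeasurable hS).sub_const _) ?_
  filter_upwards [hSR] with ω hω
  simp only [normAddDeviation, Set.mem_Icc]
  constructor <;> linarith [norm_nonneg (c + S ω), norm_add_le c (S ω)]

variable [MeasurableSpace E] [BorelSpace E] [SecondCountableTopology E]

theorem IndepFun.integral_norm_add_eq_integral_integral {Y B : Ω → E} (hYB : IndepFun Y B μ)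
    (hY : Integrable Y μ) (hB : Integrable B μ) (c : E) :
    ∫ ω, ‖c + (Y + B) ω‖ ∂μ = ∫ ω, ∫ ω', ‖c + Y ω + B ω'‖ ∂μ ∂μ := by
  simpa only [add_assoc, Pi.add_apply] using hYB.integral_comp_eq_integral_integral
    hY.aemeasurable hB.aemeasurable (F := fun y b => ‖c + (y + b)‖)
    (by fun_prop : Continuous _).aestronglyMeasurable ((integrable_const c).add (hY.add hB)).norm

theorem IndepFun.mgf_normAddDeviation_add_eq {Y B : Ω → E} (hYB : IndepFun Y B μ)
    (hY : AEMeasurable Y μ) (hB : AEMeasurable B μ) {t : ℝ} {c : E}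
    (hint : Integrable (fun ω => Real.exp (t * normAddDeviation μ (Y + B) c ω)) μ) :
    mgf (normAddDeviation μ (Y + B) c) μ t
      = ∫ ω, Real.exp (t * (∫ ω', ‖c + Y ω + B ω'‖ ∂μ - ∫ ω', ‖c + (Y + B) ω'‖ ∂μ))
          * mgf (normAddDeviation μ B (c + Y ω)) μ t ∂μ := by
  refine (hYB.integral_comp_eq_integral_integral hY hB
    (F := fun y b => Real.exp (t * (‖c + (y + b)‖ - ∫ ω', ‖c + (Y + B) ω'‖ ∂μ)))
    (by fun_prop : Continuous _).aestronglyMeasurable hint).trans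
    (integral_congr_ae (.of_forall fun ω => ?_))
  simp only [mgf, normAddDeviation, ← integral_const_mul, ← Real.exp_add, add_assoc]
  congr 1 with ω'
  ring_nf

theorem IndepFun.mgf_normAddDeviation_add_le {Y B : Ω → E} (hYB : IndepFun Y B μ)
    (hY : AEMeasurable Y μ) (hB : AEMeasurable B μ) {L R t K : ℝ} (hYL : ∀ᵐ ω ∂μ, ‖Y ω‖ ≤ L)
    (hBR : ∀ᵐ ω ∂μ, ‖B ω‖ ≤ R)
    (htL : 2 * |t| * L ≤ 1) (hK : ∀ c, mgf (normAddDeviation μ B c) μ t ≤ K) (c : E) :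
    mgf (normAddDeviation μ (Y + B) c) μ t ≤ K * Real.exp (t ^ 2 * ∫ ω, ‖Y ω‖ ^ 2 ∂μ) := by
  set h : E → ℝ := fun y => ∫ ω, ‖c + y + B ω‖ ∂μ with h_def
  set m := ∫ ω, ‖c + (Y + B) ω‖ ∂μ
  have hYB_bdd : ∀ᵐ ω ∂μ, ‖(Y + B) ω‖ ≤ L + R := by
    filter_upwards [hYL, hBR] with ω hY hB
    exact (norm_add_le (Y ω) (B ω)).trans (add_le_add hY hB)
  have hBi : Integrable B μ := .of_bound hB.aestronglyMeasurable R hBR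
  have hh : LipschitzWith 1 h := by
    have := (lipschitzWith_integral_norm_add hBi).comp (isometry_add_left c).lipschitz
    rwa [mul_one] at this
  have hhY : ∀ᵐ ω ∂μ, |h (Y ω) - h 0| ≤ L := by
    filter_upwards [hYL] with ω hω
    have := hh.dist_le_mul (Y ω) 0
    rw [Real.dist_eq, dist_zero_right, NNReal.coe_one, one_mul] at this
    exact this.trans hω
  have hm : m = μ[fun ω => h (Y ω)] :=
    hYB.integral_norm_add_eq_integral_integral (.of_bound hY.aestronglyMeasurable L hYL) hBi c
  have hhY_mgf : mgf (fun ω => h (Y ω) - m) μ t ≤ Real.exp (t ^ 2 * ∫ ω, ‖Y ω‖ ^ 2 ∂μ) := by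
    rw [hm]
    refine (mgf_sub_integral_le_exp_mul_variance (hh.continuous.comp_aestronglyMeasurable
      hY.aestronglyMeasurable) hhY htL).trans (Real.exp_le_exp.2 ?_)
    gcongr
    simpa using hh.variance_comp_le (MemLp.of_bound hY.aestronglyMeasurable L hYL)
  have hint : Integrable (fun ω => Real.exp (t * (h (Y ω) - m)) * K) μ := by
    refine (integrable_exp_mul_of_mem_Icc (a := h 0 - L - m) (b := h 0 + L - m)
      ((hh.continuous.measurable.comp_aemeasurable hY).sub_const m) ?_).mul_const K
    filter_upwards [hhY] with ω hω
    simp only [Function.comp_apply, Set.mem_Icc]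
    constructor <;> linarith [abs_le.1 hω]
  calc mgf (normAddDeviation μ (Y + B) c) μ t
      ≤ ∫ ω, Real.exp (t * (h (Y ω) - m)) * K ∂μ := by
        rw [hYB.mgf_normAddDeviation_add_eq hY hB
          (integrable_exp_mul_normAddDeviation (hY.add hB) hYB_bdd t c)]
        exact integral_mono_of_nonneg
          (.of_forall fun ω => mul_nonneg (Real.exp_nonneg _) mgf_nonneg) hint
          (.of_forall fun ω => mul_le_mul_of_nonneg_left (hK _) (Real.exp_nonneg _))
    _ = K * mgf (fun ω => h (Y ω) - m) μ t := by rw [integral_mul_const, mul_comm]; rfl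
    _ ≤ K * Real.exp (t ^ 2 * ∫ ω, ‖Y ω‖ ^ 2 ∂μ) := by
        gcongr
        exact mgf_nonneg.trans (hK 0)

theorem mgf_normAddDeviation_sum_le {ι : Type*} {X : ι → Ω → E} (hX : ∀ k, AEMeasurable (X k) μ)
    (hindep : iIndepFun X μ) {L t : ℝ} (hXL : ∀ k, ∀ᵐ ω ∂μ, ‖X k ω‖ ≤ L)
    (htL : 2 * |t| * L ≤ 1) (s : Finset ι) (c : E) :
    mgf (normAddDeviation μ (∑ k ∈ s, X k) c) μ t
      ≤ Real.exp (t ^ 2 * ∑ k ∈ s, ∫ ω, ‖X k ω‖ ^ 2 ∂μ) := by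
  classical
  induction s using Finset.induction_on generalizing c with
  | empty => simp [normAddDeviation, mgf]
  | insert j s hj ih =>
    rw [Finset.sum_insert hj, Finset.sum_insert hj, mul_add, Real.exp_add, mul_comm]
    exact (hindep.indepFun_finsetSum_of_notMem₀ hX hj).symm.mgf_normAddDeviation_add_le (hX j)
      (s.aemeasurable_sum fun k _ => hX k) (hXL j) (ae_norm_finsetSum_le hXL s) htL ih c

end NormAddDeviation

section InnerProductSpace

variable {ι E : Type*} [NormedAddCommGroup E] [InnerProductSpace ℝ E] [CompleteSpace E]
  [MeasurableSpace E] [BorelSpace E] [SecondCountableTopology E] {X : ι → Ω → E}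

theorem iIndepFun.integral_norm_finsetSum_sq (hX : ∀ k, MemLp (X k) 2 μ)
    (hindep : iIndepFun X μ) (hmean : ∀ k, μ[X k] = 0) (s : Finset ι) :
    ∫ ω, ‖(∑ k ∈ s, X k) ω‖ ^ 2 ∂μ = ∑ k ∈ s, ∫ ω, ‖X k ω‖ ^ 2 ∂μ := by
  classical
  induction s using Finset.induction_on with
  | empty => simp
  | insert j s hj ih =>
    have hS : MemLp (∑ k ∈ s, X k) 2 μ := memLp_finsetSum' s fun k _ => hX k
    have hindep' : IndepFun (X j) (∑ k ∈ s, X k) μ :=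
      (hindep.indepFun_finsetSum_of_notMem₀ (fun k => (hX k).aemeasurable) hj).symm
    have hcross : ∫ ω, inner ℝ (X j ω) ((∑ k ∈ s, X k) ω) ∂μ = 0 := by
      have := hindep'.integral_bilin ((hX j).integrable one_le_two) (hS.integrable one_le_two)
        (innerSL ℝ)
      rwa [hmean j, map_zero, zero_apply] at this
    have hXj : Integrable (fun ω => ‖X j ω‖ ^ 2) μ := (hX j).integrable_norm_pow two_ne_zero
    have hXjS : Integrable (fun ω => 2 * inner ℝ (X j ω) ((∑ k ∈ s, X k) ω)) μ :=
      (hindep'.integrable_bilin ((hX j).integrable one_le_two) (hS.integrable one_le_two)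
        (innerSL ℝ)).const_mul 2
    simp only [Finset.sum_insert hj, Pi.add_apply, norm_add_sq_real]
    rw [integral_add (f := fun ω => ‖X j ω‖ ^ 2 + _) (hXj.add hXjS)
        (hS.integrable_norm_pow two_ne_zero), integral_add hXj hXjS,
      integral_const_mul, hcross, ← ih]
    ring

theorem iIndepFun.integral_norm_finsetSum_le_sqrt (hX : ∀ k, MemLp (X k) 2 μ)
    (hindep : iIndepFun X μ) (hmean : ∀ k, μ[X k] = 0) (s : Finset ι) :
    ∫ ω, ‖(∑ k ∈ s, X k) ω‖ ∂μ ≤ √(∑ k ∈ s, ∫ ω, ‖X k ω‖ ^ 2 ∂μ) := by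
  rw [← hindep.integral_norm_finsetSum_sq hX hmean s]
  exact Real.le_sqrt_of_sq_le (sq_integral_le_integral_sq (memLp_finsetSum' s fun k _ => hX k).norm)

end InnerProductSpace

end ProbabilityTheory

theorem vector_bernstein_inequality_general
    {Ω : Type*} [MeasurableSpace Ω] (μ : Measure Ω) [IsProbabilityMeasure μ]
    (m d : ℕ) (X : Fin m → Ω → EuclideanSpace ℝ (Fin d))
    (hmeas : ∀ k, Measurable (X k))
    (hindep : iIndepFun X μ)
    (hmean : ∀ k, ∫ ω, X k ω ∂μ = 0)
    (M : ℝ) (hM : 0 < M)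
    (hvar : ∑ k, ∫ ω, ‖X k ω‖ ^ 2 ∂μ ≤ M)
    (L : ℝ) (hL : 0 < L)
    (hbdd : ∀ k, ∀ᵐ ω ∂μ, ‖X k ω‖ ≤ L)
    (τ : ℝ) (hτ : 0 < τ) (hτ' : τ ≤ M / L) :
    (μ {ω | Real.sqrt M + τ ≤ ‖∑ k, X k ω‖}).toReal ≤
      Real.exp (-τ ^ 2 / (4 * M)) := by
  have hX2 : ∀ k, MemLp (X k) 2 μ := fun k =>
    MemLp.of_bound (hmeas k).aestronglyMeasurable L (hbdd k)
  have hmean_norm : ∫ ω, ‖(∑ k, X k) ω‖ ∂μ ≤ √M :=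
    (hindep.integral_norm_finsetSum_le_sqrt hX2 hmean _).trans (Real.sqrt_le_sqrt hvar)
  set t := τ / (2 * M) with ht_def
  have ht : 0 ≤ t := by positivity
  have htL : 2 * |t| * L ≤ 1 := by
    rw [abs_of_nonneg ht, show 2 * t * L = τ * L / M by rw [ht_def]; field_simp, div_le_one hM]
    exact (le_div_iff₀ hL).1 hτ'
  have hS := Finset.univ.aemeasurable_sum fun k _ => (hmeas k).aemeasurable (μ := μ)
  calc (μ {ω | Real.sqrt M + τ ≤ ‖∑ k, X k ω‖}).toReal
      ≤ μ.real {ω | τ ≤ normAddDeviation μ (∑ k, X k) 0 ω} := by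
        refine measureReal_mono fun ω hω => ?_
        simp only [Set.mem_ofPred_eq, normAddDeviation, zero_add, Finset.sum_apply]
          at hω hmean_norm ⊢
        linarith
    _ ≤ Real.exp (-t * τ) * mgf (normAddDeviation μ (∑ k, X k) 0) μ t :=
        measure_ge_le_exp_mul_mgf τ ht
          (integrable_exp_mul_normAddDeviation hS (ae_norm_finsetSum_le hbdd _) t 0)
    _ ≤ Real.exp (-t * τ) * Real.exp (t ^ 2 * M) := by
        gcongr
        exact (mgf_normAddDeviation_sum_le (fun k => (hmeas k).aemeasurable) hindep hbdd htL _
          0).trans (Real.exp_le_exp.2 (by gcongr))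
    _ = Real.exp (-τ ^ 2 / (4 * M)) := by
        rw [← Real.exp_add, ht_def]
        congr 1
        field_simp
        ring

/-- **Vector Bernstein inequality (Lemma 8).**
Let `x₁, …, x_m` be independent zero-mean random vectors in `ℝ^d` with
`∑ E[‖x_k‖²] ≤ M` and `‖x_k‖ ≤ L` almost surely.  Then for any `0 < τ ≤ M / L`,
`P[‖∑ x_k‖ ≥ √M + τ] ≤ exp(−τ²/(4M))`. -/
theorem vector_bernstein_inequality
    {Ω : Type*} [MeasurableSpace Ω] (μ : Measure Ω) [IsProbabilityMeasure μ]
    (m d : ℕ) (X : Fin m → Ω → EuclideanSpace ℝ (Fin d))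
    (hmeas : ∀ k, Measurable (X k))
    (hint : ∀ k, Integrable (X k) μ)
    (hindep : iIndepFun X μ)
    (hmean : ∀ k, ∫ ω, X k ω ∂μ = 0)
    (M : ℝ) (hM : 0 < M)
    (hvar : ∑ k, ∫ ω, ‖X k ω‖ ^ 2 ∂μ ≤ M)
    (L : ℝ) (hL : 0 < L)
    (hbdd : ∀ k, ∀ᵐ ω ∂μ, ‖X k ω‖ ≤ L)
    (τ : ℝ) (hτ : 0 < τ) (hτ' : τ ≤ M / L) :
    (μ {ω | Real.sqrt M + τ ≤ ‖∑ k, X k ω‖}).toReal ≤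
      Real.exp (-τ ^ 2 / (4 * M)) :=
  vector_bernstein_inequality_general μ m d X hmeas hindep hmean M hM hvar L hL hbdd τ hτ hτ'
end
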